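/- arXiv:1410.5500 — 4 statements merged into one kernel-verified Lean document; each statement's English description precedes it below -/
import Mathlib

section
/- Let G be a finite group and α: G×G → U(1) a normalized 2-cocycle (i.e., α(g,h)α(gh,k) = α(h,k)α(g,hk) for all g,h,k, and α(e,g)=α(g,e)=1). Define τ^α(h,g) = α(hgh⁻¹,h)·α(h,g)⁻¹. Then τ^α satisfies the cocycle condition for the conjugation action groupoid G⫽G: for all g,h₁,h₂ ∈ G, τ^α(h₂, h₁gh₁⁻¹)·τ^α(h₁, g) = τ^α(h₂h₁, g). -/
/-- The transgression `τ^α(h,g) = α(hgh⁻¹,h)·α(h,g)⁻¹` of a normalized 2-cocycle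
`α : G × G → U(1)` satisfies the 1-cocycle condition for the conjugation action
groupoid `G ⫽ G`. -/
theorem transgression_is_cocycle {G : Type*} [Group G] [Finite G]
    (α : G → G → Circle)
    (hcoc : ∀ g h k, α g h * α (g * h) k = α h k * α g (h * k))
    (hnorm₁ : ∀ g, α 1 g = 1) (hnorm₂ : ∀ g, α g 1 = 1)
    (τ : G → G → Circle)
    (hτ : ∀ h g, τ h g = α (h * g * h⁻¹) h * (α h g)⁻¹) :
    ∀ g h₁ h₂, τ h₂ (h₁ * g * h₁⁻¹) * τ h₁ g = τ (h₂ * h₁) g := by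
  intro g h₁ h₂
  have e1 := hcoc h₂ (h₁ * g * h₁⁻¹) h₁
  have e2 := hcoc (h₂ * (h₁ * g * h₁⁻¹) * h₂⁻¹) h₂ h₁
  have e3 := hcoc h₂ h₁ g
  rw [hτ, hτ, hτ]
  rw [show (h₂ * (h₁ * g * h₁⁻¹) * h₂⁻¹) * h₂ = h₂ * (h₁ * g * h₁⁻¹) by group] at e2
  rw [show h₁ * g * h₁⁻¹ * h₁ = h₁ * g by group] at e1
  rw [show h₂ * h₁ * g * (h₂ * h₁)⁻¹ = h₂ * (h₁ * g * h₁⁻¹) * h₂⁻¹ by group]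
  have n : ∀ x : Circle, (x : ℂ) ≠ 0 := fun x => x.coe_ne_zero
  apply Circle.ext
  have c1 := congrArg (fun x : Circle => (x : ℂ)) e1
  have c2 := congrArg (fun x : Circle => (x : ℂ)) e2
  have c3 := congrArg (fun x : Circle => (x : ℂ)) e3
  push_cast at c1 c2 c3 ⊢
  set A := ((α (h₂ * (h₁ * g * h₁⁻¹) * h₂⁻¹) h₂ : Circle) : ℂ) with hA
  set B := ((α h₂ (h₁ * g * h₁⁻¹) : Circle) : ℂ) with hB
  set C := ((α (h₁ * g * h₁⁻¹) h₁ : Circle) : ℂ) with hC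
  set D := ((α h₁ g : Circle) : ℂ) with hD
  set E := ((α (h₂ * (h₁ * g * h₁⁻¹) * h₂⁻¹) (h₂ * h₁) : Circle) : ℂ) with hE
  set F := ((α (h₂ * h₁) g : Circle) : ℂ) with hF
  set M := ((α (h₂ * (h₁ * g * h₁⁻¹)) h₁ : Circle) : ℂ) with hM
  set N := ((α h₂ (h₁ * g) : Circle) : ℂ) with hN
  set P := ((α h₂ h₁ : Circle) : ℂ) with hP
  -- c1 : B * M = C * N, c2 : A * M = P * E, c3 : P * F = D * N
  have hMNP : M * N * P ≠ 0 := by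
    simp only [hM, hN, hP]
    exact mul_ne_zero (mul_ne_zero (n _) (n _)) (n _)
  have aux : A * C * F * (M * N * P) = B * D * E * (M * N * P) := by
    linear_combination (C * N * P * F) * c2 + (P * E * C * N) * c3 - (P * E * D * N) * c1
  have key : A * C * F = B * D * E := mul_right_cancel₀ hMNP aux
  have hB0 : B ≠ 0 := n _
  have hD0 : D ≠ 0 := n _
  have hF0 : F ≠ 0 := n _
  field_simp
  linear_combination key
end

section
/- Let G be a group and α: G×G → U(1) a normalized 2-cocycle. Then the character χ^α_g: Z(g) → U(1) defined by χ^α_g(h) = α(h,g)·α(g,h)⁻¹ is a group homomorphism on the centralizer Z(g) of g in G. -/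
/-- The transgressed character `χ^α_g(h) = α(h,g)·α(g,h)⁻¹` is a group homomorphism
on the centralizer `Z(g)` of `g` in `G`. -/
theorem chi_is_hom_on_centralizer {G : Type*} [Group G]
    (α : G → G → Circle)
    (hcoc : ∀ a b c, α a b * α (a * b) c = α b c * α a (b * c))
    (hnorm₁ : ∀ a, α 1 a = 1) (hnorm₂ : ∀ a, α a 1 = 1)
    (g : G) (χ : G → Circle) (hχ : ∀ h, χ h = α h g * (α g h)⁻¹) :
    ∀ h₁ h₂, h₁ * g = g * h₁ → h₂ * g = g * h₂ →
      χ (h₁ * h₂) = χ h₁ * χ h₂ := by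
  intro h₁ h₂ hg1 hg2
  have e1 := hcoc h₁ h₂ g
  have e2 := hcoc h₁ g h₂
  have e3 := hcoc g h₁ h₂
  rw [hg2] at e1
  rw [hg1] at e2
  -- pass to ℂ
  have c1 := congrArg (fun x : Circle => (x : ℂ)) e1
  have c2 := congrArg (fun x : Circle => (x : ℂ)) e2
  have c3 := congrArg (fun x : Circle => (x : ℂ)) e3
  push_cast at c1 c2 c3
  have goal' : ((χ (h₁ * h₂) : ℂ)) = (χ h₁ : ℂ) * (χ h₂ : ℂ) → χ (h₁ * h₂) = χ h₁ * χ h₂ := by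
    intro h
    ext
    push_cast
    exact h
  apply goal'
  simp only [hχ]
  push_cast
  have n1 : ((α g (h₁ * h₂) : ℂ)) ≠ 0 := Circle.coe_ne_zero _
  have n2 : ((α g h₁ : ℂ)) ≠ 0 := Circle.coe_ne_zero _
  have n3 : ((α g h₂ : ℂ)) ≠ 0 := Circle.coe_ne_zero _
  have n4 : ((α h₁ h₂ : ℂ)) ≠ 0 := Circle.coe_ne_zero _
  have n5 : ((α (g * h₁) h₂ : ℂ)) ≠ 0 := Circle.coe_ne_zero _
  have key : (α (h₁*h₂) g : ℂ) * (α g h₁ : ℂ) * (α g h₂ : ℂ)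
      = (α h₁ g : ℂ) * (α h₂ g : ℂ) * (α g (h₁*h₂) : ℂ) := by
    have hDY : ((α h₁ h₂ : ℂ)) * ((α (g*h₁) h₂ : ℂ)) ≠ 0 := mul_ne_zero n4 n5
    apply mul_right_cancel₀ hDY
    linear_combination ((α g h₁ : ℂ) * (α g h₂ : ℂ) * (α (g*h₁) h₂ : ℂ)) * c1
      + ((α h₂ g : ℂ) * (α h₁ (g*h₂) : ℂ) * (α g h₂ : ℂ)) * c3
      - ((α h₂ g : ℂ) * (α g (h₁*h₂) : ℂ) * (α h₁ h₂ : ℂ)) * c2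
  field_simp
  linear_combination key
end

section
/- Let G be a group, α: G³ → U(1) a normalized 3-cocycle, and (g₁,g₂) a commuting pair. Define χ^α_{g₁,g₂}: Z(g₁,g₂) → U(1) by χ^α_{g₁,g₂}(h) = [α(h,g₁,g₂)·α(g₂,h,g₁)·α(g₁,g₂,h)] / [α(g₁,h,g₂)·α(h,g₂,g₁)·α(g₂,g₁,h)]. Then, restricted to any abelian subgroup of Z(g₁,g₂) containing g₁,g₂, χ^α_{g₁,g₂} is a homomorphism, i.e. χ^α_{g₁,g₂}(h₁h₂) = χ^α_{g₁,g₂}(h₁)·χ^α_{g₁,g₂}(h₂) for all h₁,h₂ in such a subgroup. -/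
/-- Restricted to pairwise-commuting elements (e.g. any abelian subgroup of the
joint centralizer containing `g₁` and `g₂`), the character
`χ^α_{g₁,g₂}(h) = [α(h,g₁,g₂)α(g₂,h,g₁)α(g₁,g₂,h)]/[α(g₁,h,g₂)α(h,g₂,g₁)α(g₂,g₁,h)]`
of a normalized 3-cocycle is multiplicative. -/
theorem chi3_multiplicative {G : Type*} [Group G]
    (α : G → G → G → Circle)
    (hcoc : ∀ k₁ k₂ k₃ k₄, α k₂ k₃ k₄ * α k₁ (k₂ * k₃) k₄ * α k₁ k₂ k₃ =
      α (k₁ * k₂) k₃ k₄ * α k₁ k₂ (k₃ * k₄))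
    (hnorm : ∀ k₁ k₂ k₃, k₁ = 1 ∨ k₂ = 1 ∨ k₃ = 1 → α k₁ k₂ k₃ = 1)
    (g₁ g₂ : G) (hcomm : g₁ * g₂ = g₂ * g₁)
    (χ : G → Circle)
    (hχ : ∀ h, χ h = (α h g₁ g₂ * α g₂ h g₁ * α g₁ g₂ h) *
      (α g₁ h g₂ * α h g₂ g₁ * α g₂ g₁ h)⁻¹) :
    ∀ h₁ h₂ : G,
      h₁ * g₁ = g₁ * h₁ → h₁ * g₂ = g₂ * h₁ →
      h₂ * g₁ = g₁ * h₂ → h₂ * g₂ = g₂ * h₂ →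
      h₁ * h₂ = h₂ * h₁ →
      χ (h₁ * h₂) = χ h₁ * χ h₂ := by
  intro h₁ h₂ c11 c12 c21 c22 cc
  have hc : ∀ k₁ k₂ k₃ k₄ : G, ((α k₂ k₃ k₄ : Circle) : ℂ) * ((α k₁ (k₂ * k₃) k₄ : Circle) : ℂ)
      * ((α k₁ k₂ k₃ : Circle) : ℂ)
      = ((α (k₁ * k₂) k₃ k₄ : Circle) : ℂ) * ((α k₁ k₂ (k₃ * k₄) : Circle) : ℂ) := by
    intro k₁ k₂ k₃ k₄
    exact_mod_cast congrArg Subtype.val (hcoc k₁ k₂ k₃ k₄)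
  have E1 := hc g₁ g₂ h₁ h₂
  have E2 := hc g₁ h₁ g₂ h₂
  rw [c12] at E2
  have E3 := hc g₁ h₁ h₂ g₂
  rw [c22] at E3
  have E4 := hc g₂ g₁ h₁ h₂
  rw [← hcomm] at E4
  have E5 := hc g₂ h₁ g₁ h₂
  rw [c11] at E5
  have E6 := hc g₂ h₁ h₂ g₁
  rw [c21] at E6
  have E7 := hc h₁ g₁ g₂ h₂
  rw [c11] at E7
  have E8 := hc h₁ g₁ h₂ g₂
  rw [c11, c22] at E8
  have E9 := hc h₁ g₂ g₁ h₂
  rw [← hcomm, c12] at E9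
  have E10 := hc h₁ g₂ h₂ g₁
  rw [c12, c21] at E10
  have E11 := hc h₁ h₂ g₁ g₂
  rw [c21] at E11
  have E12 := hc h₁ h₂ g₂ g₁
  rw [c22, ← hcomm] at E12
  have hAB : (((α (g₁ * g₂) h₁ h₂ : Circle) : ℂ) * ((α g₁ g₂ (h₁ * h₂) : Circle) : ℂ)) * (((α h₁ g₂ h₂ : Circle) : ℂ) * ((α g₁ (g₂ * h₁) h₂ : Circle) : ℂ) * ((α g₁ h₁ g₂) : Circle) : ℂ) * (((α (g₁ * h₁) h₂ g₂ : Circle) : ℂ) * ((α g₁ h₁ (g₂ * h₂) : Circle) : ℂ)) * (((α g₁ h₁ h₂ : Circle) : ℂ) * ((α g₂ (g₁ * h₁) h₂ : Circle) : ℂ) * ((α g₂ g₁ h₁) : Circle) : ℂ) * (((α (g₂ * h₁) g₁ h₂ : Circle) : ℂ) * ((α g₂ h₁ (g₁ * h₂) : Circle) : ℂ)) * (((α h₁ h₂ g₁ : Circle) : ℂ) * ((α g₂ (h₁ * h₂) g₁ : Circle) : ℂ) * ((α g₂ h₁ h₂) : Circle) : ℂ) * (((α (g₁ * h₁) g₂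 h₂ : Circle) : ℂ) * ((α h₁ g₁ (g₂ * h₂) : Circle) : ℂ)) * (((α g₁ h₂ g₂ : Circle) : ℂ) * ((α h₁ (g₁ * h₂) g₂ : Circle) : ℂ) * ((α h₁ g₁ h₂) : Circle) : ℂ) * (((α g₂ g₁ h₂ : Circle) : ℂ) * ((α h₁ (g₁ * g₂) h₂ : Circle) : ℂ) * ((α h₁ g₂ g₁) : Circle) : ℂ) * (((α (g₂ * h₁) h₂ g₁ : Circle) : ℂ) * ((α h₁ g₂ (g₁ * h₂) : Circle) : ℂ)) * (((α (h₁ * h₂) g₁ g₂ : Circle) : ℂ) * ((α h₁ h₂ (g₁ * g₂) : Circle) : ℂ)) * (((α h₂ g₂ g₁ : Circle) : ℂ) * ((α h₁ (g₂ * h₂) g₁ : Circle) : ℂ) * ((α h₁ h₂ g₂) : Circle) : ℂ) = (((α g₂ h₁ h₂ : Circle) : ℂ) * ((α g₁ (g₂ * h₁) h₂ : Circle) : ℂ) * ((α g₁ g₂ h₁) : Circle) : ℂ) * (((α (g₁ * h₁) g₂ h₂ : Circle) : ℂ) * ((α g₁ h₁ (g₂ * h₂) : Circle) : ℂ)) *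 (((α h₁ h₂ g₂ : Circle) : ℂ) * ((α g₁ (h₁ * h₂) g₂ : Circle) : ℂ) * ((α g₁ h₁ h₂) : Circle) : ℂ) * (((α (g₁ * g₂) h₁ h₂ : Circle) : ℂ) * ((α g₂ g₁ (h₁ * h₂) : Circle) : ℂ)) * (((α h₁ g₁ h₂ : Circle) : ℂ) * ((α g₂ (g₁ * h₁) h₂ : Circle) : ℂ) * ((α g₂ h₁ g₁) : Circle) : ℂ) * (((α (g₂ * h₁) h₂ g₁ : Circle) : ℂ) * ((α g₂ h₁ (g₁ * h₂) : Circle) : ℂ)) * (((α g₁ g₂ h₂ : Circle) : ℂ) * ((α h₁ (g₁ * g₂) h₂ : Circle) : ℂ) * ((α h₁ g₁ g₂) : Circle) : ℂ) * (((α (g₁ * h₁) h₂ g₂ : Circle) : ℂ) * ((α h₁ g₁ (g₂ * h₂) : Circle) : ℂ)) * (((α (g₂ * h₁) g₁ h₂ : Circle) : ℂ) * ((α h₁ g₂ (g₁ * h₂) : Circle) : ℂ)) * (((α g₂ h₂ g₁ : Circle) : ℂ) * ((α h₁ (g₂ * h₂) g₁ : Circle) : ℂ) * ((α h₁ g₂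 h₂) : Circle) : ℂ) * (((α h₂ g₁ g₂ : Circle) : ℂ) * ((α h₁ (g₁ * h₂) g₂ : Circle) : ℂ) * ((α h₁ h₂ g₁) : Circle) : ℂ) * (((α (h₁ * h₂) g₂ g₁ : Circle) : ℂ) * ((α h₁ h₂ (g₁ * g₂) : Circle) : ℂ)) := by
    rw [← E1, E2, ← E3, E4, ← E5, E6, ← E7, E8, E9, ← E10, ← E11, E12]
  have hkey : (((α (h₁ * h₂) g₁ g₂ : Circle) : ℂ) * ((α g₂ (h₁ * h₂) g₁ : Circle) : ℂ) * ((α g₁ g₂ (h₁ * h₂) : Circle) : ℂ)) * ((((α g₁ h₁ g₂ : Circle) : ℂ) * ((α h₁ g₂ g₁ : Circle) : ℂ) * ((α g₂ g₁ h₁ : Circle) : ℂ)) * (((α g₁ h₂ g₂ : Circle) : ℂ) * ((α h₂ g₂ g₁ : Circle) : ℂ) * ((α g₂ g₁ h₂ : Circle) : ℂ))) * ((((α g₂ h₁ h₂ : Circle) : ℂ) * ((α g₁ (g₂ * h₁) h₂ : Circle) : ℂ) * ((α g₁ g₂ h₁) : Circle) : ℂ) * (((α (g₁ * h₁) g₂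 h₂ : Circle) : ℂ) * ((α g₁ h₁ (g₂ * h₂) : Circle) : ℂ)) * (((α h₁ h₂ g₂ : Circle) : ℂ) * ((α g₁ (h₁ * h₂) g₂ : Circle) : ℂ) * ((α g₁ h₁ h₂) : Circle) : ℂ) * (((α (g₁ * g₂) h₁ h₂ : Circle) : ℂ) * ((α g₂ g₁ (h₁ * h₂) : Circle) : ℂ)) * (((α h₁ g₁ h₂ : Circle) : ℂ) * ((α g₂ (g₁ * h₁) h₂ : Circle) : ℂ) * ((α g₂ h₁ g₁) : Circle) : ℂ) * (((α (g₂ * h₁) h₂ g₁ : Circle) : ℂ) * ((α g₂ h₁ (g₁ * h₂) : Circle) : ℂ)) * (((α g₁ g₂ h₂ : Circle) : ℂ) * ((α h₁ (g₁ * g₂) h₂ : Circle) : ℂ) * ((α h₁ g₁ g₂) : Circle) : ℂ) * (((α (g₁ * h₁) h₂ g₂ : Circle) : ℂ) * ((α h₁ g₁ (g₂ * h₂) : Circle) : ℂ)) * (((α (g₂ * h₁) g₁ h₂ : Circle) : ℂ) * ((α h₁ g₂ (g₁ * h₂) : Circle) : ℂ)) * (((α g₂ h₂ g₁ : Circle)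 : ℂ) * ((α h₁ (g₂ * h₂) g₁ : Circle) : ℂ) * ((α h₁ g₂ h₂) : Circle) : ℂ) * (((α h₂ g₁ g₂ : Circle) : ℂ) * ((α h₁ (g₁ * h₂) g₂ : Circle) : ℂ) * ((α h₁ h₂ g₁) : Circle) : ℂ) * (((α (h₁ * h₂) g₂ g₁ : Circle) : ℂ) * ((α h₁ h₂ (g₁ * g₂) : Circle) : ℂ)))
      = (((α h₁ g₁ g₂ : Circle) : ℂ) * ((α g₂ h₁ g₁ : Circle) : ℂ) * ((α g₁ g₂ h₁ : Circle) : ℂ)) * (((α h₂ g₁ g₂ : Circle) : ℂ) * ((α g₂ h₂ g₁ : Circle) : ℂ) * ((α g₁ g₂ h₂ : Circle) : ℂ)) * (((α g₁ (h₁ * h₂) g₂ : Circle) : ℂ) * ((α (h₁ * h₂) g₂ g₁ : Circle) : ℂ) * ((α g₂ g₁ (h₁ * h₂) : Circle) : ℂ)) * ((((α (g₁ * g₂) h₁ h₂ : Circle) : ℂ) * ((α g₁ g₂ (h₁ * h₂) : Circle) : ℂ)) * (((α h₁ g₂ h₂ : Circle) : ℂ) * ((α g₁ (g₂ * h₁)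 h₂ : Circle) : ℂ) * ((α g₁ h₁ g₂) : Circle) : ℂ) * (((α (g₁ * h₁) h₂ g₂ : Circle) : ℂ) * ((α g₁ h₁ (g₂ * h₂) : Circle) : ℂ)) * (((α g₁ h₁ h₂ : Circle) : ℂ) * ((α g₂ (g₁ * h₁) h₂ : Circle) : ℂ) * ((α g₂ g₁ h₁) : Circle) : ℂ) * (((α (g₂ * h₁) g₁ h₂ : Circle) : ℂ) * ((α g₂ h₁ (g₁ * h₂) : Circle) : ℂ)) * (((α h₁ h₂ g₁ : Circle) : ℂ) * ((α g₂ (h₁ * h₂) g₁ : Circle) : ℂ) * ((α g₂ h₁ h₂) : Circle) : ℂ) * (((α (g₁ * h₁) g₂ h₂ : Circle) : ℂ) * ((α h₁ g₁ (g₂ * h₂) : Circle) : ℂ)) * (((α g₁ h₂ g₂ : Circle) : ℂ) * ((α h₁ (g₁ * h₂) g₂ : Circle) : ℂ) * ((α h₁ g₁ h₂) : Circle) : ℂ) * (((α g₂ g₁ h₂ : Circle) : ℂ) * ((α h₁ (g₁ * g₂) h₂ : Circle) : ℂ) * ((α h₁ g₂ g₁) : Circle) : ℂ) * (((α (g₂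 * h₁) h₂ g₁ : Circle) : ℂ) * ((α h₁ g₂ (g₁ * h₂) : Circle) : ℂ)) * (((α (h₁ * h₂) g₁ g₂ : Circle) : ℂ) * ((α h₁ h₂ (g₁ * g₂) : Circle) : ℂ)) * (((α h₂ g₂ g₁ : Circle) : ℂ) * ((α h₁ (g₂ * h₂) g₁ : Circle) : ℂ) * ((α h₁ h₂ g₂) : Circle) : ℂ)) := by ring
  rw [← hAB] at hkey
  have hBne : ((((α (g₁ * g₂) h₁ h₂ : Circle) : ℂ) * ((α g₁ g₂ (h₁ * h₂) : Circle) : ℂ)) * (((α h₁ g₂ h₂ : Circle) : ℂ) * ((α g₁ (g₂ * h₁) h₂ : Circle) : ℂ) * ((α g₁ h₁ g₂) : Circle) : ℂ) * (((α (g₁ * h₁) h₂ g₂ : Circle) : ℂ) * ((α g₁ h₁ (g₂ * h₂) : Circle) : ℂ)) * (((α g₁ h₁ h₂ : Circle) : ℂ) * ((α g₂ (g₁ * h₁) h₂ : Circle) : ℂ) * ((α g₂ g₁ h₁) : Circle) : ℂ) * (((α (g₂ * h₁) g₁ h₂ : Circle) : ℂ) * ((α g₂ h₁ (g₁ * h₂)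 : Circle) : ℂ)) * (((α h₁ h₂ g₁ : Circle) : ℂ) * ((α g₂ (h₁ * h₂) g₁ : Circle) : ℂ) * ((α g₂ h₁ h₂) : Circle) : ℂ) * (((α (g₁ * h₁) g₂ h₂ : Circle) : ℂ) * ((α h₁ g₁ (g₂ * h₂) : Circle) : ℂ)) * (((α g₁ h₂ g₂ : Circle) : ℂ) * ((α h₁ (g₁ * h₂) g₂ : Circle) : ℂ) * ((α h₁ g₁ h₂) : Circle) : ℂ) * (((α g₂ g₁ h₂ : Circle) : ℂ) * ((α h₁ (g₁ * g₂) h₂ : Circle) : ℂ) * ((α h₁ g₂ g₁) : Circle) : ℂ) * (((α (g₂ * h₁) h₂ g₁ : Circle) : ℂ) * ((α h₁ g₂ (g₁ * h₂) : Circle) : ℂ)) * (((α (h₁ * h₂) g₁ g₂ : Circle) : ℂ) * ((α h₁ h₂ (g₁ * g₂) : Circle) : ℂ)) * (((α h₂ g₂ g₁ : Circle) : ℂ) * ((α h₁ (g₂ * h₂) g₁ : Circle) : ℂ) * ((α h₁ h₂ g₂) : Circle) : ℂ)) ≠ 0 := by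
    simp [mul_ne_zero_iff]
  have heq : (((α (h₁ * h₂) g₁ g₂ : Circle) : ℂ) * ((α g₂ (h₁ * h₂) g₁ : Circle) : ℂ) * ((α g₁ g₂ (h₁ * h₂) : Circle) : ℂ)) * ((((α g₁ h₁ g₂ : Circle) : ℂ) * ((α h₁ g₂ g₁ : Circle) : ℂ) * ((α g₂ g₁ h₁ : Circle) : ℂ)) * (((α g₁ h₂ g₂ : Circle) : ℂ) * ((α h₂ g₂ g₁ : Circle) : ℂ) * ((α g₂ g₁ h₂ : Circle) : ℂ))) = (((α h₁ g₁ g₂ : Circle) : ℂ) * ((α g₂ h₁ g₁ : Circle) : ℂ) * ((α g₁ g₂ h₁ : Circle) : ℂ)) * (((α h₂ g₁ g₂ : Circle) : ℂ) * ((α g₂ h₂ g₁ : Circle) : ℂ) * ((α g₁ g₂ h₂ : Circle) : ℂ)) * (((α g₁ (h₁ * h₂) g₂ : Circle) : ℂ) * ((α (h₁ * h₂) g₂ g₁ : Circle) : ℂ) * ((α g₂ g₁ (h₁ * h₂) : Circle) : ℂ)) :=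
    mul_right_cancel₀ hBne hkey
  apply Circle.coe_injective
  rw [hχ, hχ, hχ]
  push_cast
  rw [← div_eq_mul_inv, ← div_eq_mul_inv, ← div_eq_mul_inv, div_mul_div_comm,
    div_eq_div_iff (by simp [mul_ne_zero_iff]) (by simp [mul_ne_zero_iff])]
  linear_combination heq
end

section
/- Let G be a finite group, H ≤ G a subgroup, α: G×G → U(1) a normalized 2-cocycle, and s: H → ℂ a function satisfying the twisted equivariance s(khk⁻¹) = τ^α(k,h)·s(h) for all h ∈ H, k ∈ H, where τ^α(k,h) = α(khk⁻¹,k)/α(k,h). Define f₋(g) = (1/|H|)·Σ_{x ∈ G, x⁻¹gx ∈ H} τ^α(x, x⁻¹gx)·s(x⁻¹gx) (using the extension of τ^α to all of G via the same formula). Then f₋ satisfies f₋(ygy⁻¹) = τ^α(y,g)·f₋(g) for all g,y ∈ G. -/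
/-- Freed–Quinn induction of twisted-equivariant functions: if `s : G → ℂ` is
supported on `H` and satisfies `s(khk⁻¹) = τ^α(k,h)·s(h)` for `h, k ∈ H`, then
`f(g) = (1/|H|) Σ_{x : x⁻¹gx ∈ H} τ^α(x,x⁻¹gx)·s(x⁻¹gx)` satisfies
`f(ygy⁻¹) = τ^α(y,g)·f(g)` for all `g, y ∈ G`. -/
theorem twisted_induction_equivariant {G : Type*} [Group G] [Fintype G]
    (H : Subgroup G) [DecidablePred (· ∈ H)]
    (α : G → G → Circle)
    (hcoc : ∀ a b c, α a b * α (a * b) c = α b c * α a (b * c))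
    (hnorm₁ : ∀ a, α 1 a = 1) (hnorm₂ : ∀ a, α a 1 = 1)
    (τ : G → G → Circle)
    (hτ : ∀ k g, τ k g = α (k * g * k⁻¹) k * (α k g)⁻¹)
    (s : G → ℂ)
    (hsupp : ∀ g, g ∉ H → s g = 0)
    (hequiv : ∀ h ∈ H, ∀ k ∈ H, s (k * h * k⁻¹) = (τ k h : ℂ) * s h)
    (f : G → ℂ)
    (hf : ∀ g, f g = (1 / (Nat.card H : ℂ)) *
      ∑ x ∈ Finset.univ.filter (fun x : G => x⁻¹ * g * x ∈ H),
        (τ x (x⁻¹ * g * x) : ℂ) * s (x⁻¹ * g * x)) :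
    ∀ g y, f (y * g * y⁻¹) = (τ y g : ℂ) * f g := by
  -- the 1-cocycle identity for τ, derived from the 2-cocycle identity for α
  have key : ∀ y x h : G, (τ (y * x) h : ℂ) = (τ y (x * h * x⁻¹) : ℂ) * τ x h := by
    intro y x h
    set u : G := x * h * x⁻¹ with hu
    set v : G := y * u * y⁻¹ with hv
    have A := hcoc v y x
    have B := hcoc y u x
    have C := hcoc y x h
    have hvy : v * y = y * u := by rw [hv]; group
    have hux : u * x = x * h := by rw [hu]; group
    rw [hvy] at A
    rw [hux] at B
    have A' : (α v y : ℂ) * α (y * u) x = α y x * α v (y * x) := by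
      have := congrArg (fun z : Circle => (z : ℂ)) A; simpa only [Circle.coe_mul] using this
    have B' : (α y u : ℂ) * α (y * u) x = α u x * α y (x * h) := by
      have := congrArg (fun z : Circle => (z : ℂ)) B; simpa only [Circle.coe_mul] using this
    have C' : (α y x : ℂ) * α (y * x) h = α x h * α y (x * h) := by
      have := congrArg (fun z : Circle => (z : ℂ)) C; simpa only [Circle.coe_mul] using this
    have e1 : (y * x) * h * (y * x)⁻¹ = v := by rw [hv, hu]; group
    have main : (α y x : ℂ) * (α v (y * x) * α x h * α y u) =
        (α y x : ℂ) * (α v y * α u x * α (y * x) h) := by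
      linear_combination (-(α x h : ℂ) * α y u) * A' + ((α v y : ℂ) * α x h) * B'
        + (-(α v y : ℂ) * α u x) * C'
    have main2 : (α v (y * x) : ℂ) * α x h * α y u = α v y * α u x * α (y * x) h :=
      mul_left_cancel₀ (Circle.coe_ne_zero _) main
    rw [hτ, hτ, hτ, e1]
    push_cast
    field_simp
    rw [← hv, ← hu]
    linear_combination main2
  intro g y
  have hsum : ∑ x ∈ Finset.univ.filter
        (fun x : G => x⁻¹ * (y * g * y⁻¹) * x ∈ H),
        (τ x (x⁻¹ * (y * g * y⁻¹) * x) : ℂ) * s (x⁻¹ * (y * g * y⁻¹) * x)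
      = (τ y g : ℂ) * ∑ x ∈ Finset.univ.filter (fun x : G => x⁻¹ * g * x ∈ H),
        (τ x (x⁻¹ * g * x) : ℂ) * s (x⁻¹ * g * x) := by
    rw [Finset.mul_sum]
    refine Finset.sum_nbij' (fun x => y⁻¹ * x) (fun x => y * x) ?_ ?_ ?_ ?_ ?_
    · intro x hx
      simp only [Finset.mem_filter, Finset.mem_univ, true_and] at hx ⊢
      have : (y⁻¹ * x)⁻¹ * g * (y⁻¹ * x) = x⁻¹ * (y * g * y⁻¹) * x := by group
      rw [this]; exact hx
    · intro x hx
      simp only [Finset.mem_filter, Finset.mem_univ, true_and] at hx ⊢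
      have : (y * x)⁻¹ * (y * g * y⁻¹) * (y * x) = x⁻¹ * g * x := by group
      rw [this]; exact hx
    · intro x _; group
    · intro x _; group
    · intro x hx
      simp only [Finset.mem_filter, Finset.mem_univ, true_and] at hx
      have e2 : (y⁻¹ * x)⁻¹ * g * (y⁻¹ * x) = x⁻¹ * (y * g * y⁻¹) * x := by group
      have e3 : x = y * (y⁻¹ * x) := by group
      have e4 : (y⁻¹ * x) * ((y⁻¹ * x)⁻¹ * g * (y⁻¹ * x)) * (y⁻¹ * x)⁻¹ = g := by group
      calc (τ x (x⁻¹ * (y * g * y⁻¹) * x) : ℂ) * s (x⁻¹ * (y * g * y⁻¹) * x)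
          = (τ (y * (y⁻¹ * x)) ((y⁻¹ * x)⁻¹ * g * (y⁻¹ * x)) : ℂ)
            * s ((y⁻¹ * x)⁻¹ * g * (y⁻¹ * x)) := by rw [e2, ← e3]
        _ = (τ y g : ℂ) * ((τ (y⁻¹ * x) ((y⁻¹ * x)⁻¹ * g * (y⁻¹ * x)) : ℂ)
            * s ((y⁻¹ * x)⁻¹ * g * (y⁻¹ * x))) := by rw [key, e4]; ring
  rw [hf, hf, hsum]; ring
end
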